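/- Assume the Eisenbud–Green–Harris bound: let R = K[x₁,...,xₙ], and let I ⊆ R be a homogeneous ideal with dim_K (R/I)_{d+1} ≤ (dim_K (R/I)_d)^{(d)} for all d > 0 (Macaulay growth via the EGH operation). If I is generated by m linearly independent homogeneous quadrics, so dim_K(R/I)_2 = C(n+1,2) − m, and if α is the integer with C(n+1,2) − C(n−α,2) < m ≤ C(n+1,2) − C(n−α−1,2), then dim_K (R/I)_{n−α} = 0, i.e., (R/I)_d = 0 for all d ≥ n − α. -/

import Mathlib

open MvPolynomial

/-- The largest `a` with `C(a, d) ≤ ℓ`. -/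
def macaulayMax (ℓ d : ℕ) : ℕ :=
  Nat.findGreatest (fun a => Nat.choose a d ≤ ℓ) (ℓ + d)

/-- The Macaulay (EGH) operation `ℓ ↦ ℓ^(d)`: if `ℓ = C(ℓ_d, d) + ⋯ + C(ℓ_1, 1)` is
the Macaulay expansion, then `ℓ^(d) = C(ℓ_d, d+1) + ⋯ + C(ℓ_1, 2)`. -/
def macaulayOp : ℕ → ℕ → ℕ
  | _, 0 => 0
  | ℓ, 1 => ℓ.choose 2
  | ℓ, (d + 2) =>
      Nat.choose (macaulayMax ℓ (d + 2)) (d + 3) +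
        macaulayOp (ℓ - Nat.choose (macaulayMax ℓ (d + 2)) (d + 2)) (d + 1)

/-- `dim_K (R/I)_d`: the dimension of the degree-`d` graded piece of `R/I`. -/
noncomputable def hilbFn (K : Type*) [Field K] (n : ℕ)
    (I : Ideal (MvPolynomial (Fin n) K)) (d : ℕ) : ℕ :=
  Module.finrank K
    ((homogeneousSubmodule (Fin n) K d).map (Ideal.Quotient.mkₐ K I).toLinearMap)

/-!
Put `c = n - α - 1` and `μ = C(n+1,2) - C(c,2) - m`. The bracket on `m` says exactly `μ < c`,
and counting the `m` independent quadrics gives `dim (R/I)_2 ≤ C(c,2) + μ`. The bound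
`C(c,d) + C(μ,d-1)` is stable under the Macaulay operation: the leading binomial `C(a,d)` in the
Macaulay expansion of such an `ℓ` has `a ≤ c`, and `ℓ ≤ C(b,d)` implies `ℓ^(d) ≤ C(b,d+1)`.
So `dim (R/I)_d ≤ C(c,d) + C(μ,d-1)` for all `d ≥ 2`; this vanishes at `d = c + 1 = n - α`, and
`0^(d) = 0` keeps the Hilbert function at zero from then on.
-/

lemma succ_le_choose_add_succ (ℓ k : ℕ) : ℓ + 1 ≤ (ℓ + k + 1).choose (k + 1) := by
  induction k with
  | zero => simp
  | succ k ih => rw [← add_assoc, Nat.choose_succ_succ']; omega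

lemma choose_succ_lt_choose_succ {μ c k : ℕ} (hμ : μ < c) (hk : k < c) :
    μ.choose (k + 1) < c.choose (k + 1) := by
  obtain ⟨c, rfl⟩ : ∃ c', c = c' + 1 := ⟨c - 1, by omega⟩
  rw [Nat.choose_succ_succ']
  have := Nat.choose_pos (show k ≤ c by omega)
  have := Nat.choose_le_choose (k + 1) (show μ ≤ c by omega)
  omega

lemma choose_add_choose_succ_le {a c : ℕ} (h : a < c) (k : ℕ) :
    a.choose k + a.choose (k + 1) ≤ c.choose (k + 1) :=
  Nat.choose_succ_succ' a k ▸ Nat.choose_le_choose _ h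

lemma choose_macaulayMax_le (ℓ : ℕ) {d : ℕ} (hd : d ≠ 0) : (macaulayMax ℓ d).choose d ≤ ℓ :=
  Nat.findGreatest_spec (P := fun a => a.choose d ≤ ℓ) (Nat.zero_le _)
    (by simp [Nat.choose_eq_zero_of_lt (Nat.pos_of_ne_zero hd)])

lemma lt_choose_macaulayMax_succ (ℓ : ℕ) {d : ℕ} (hd : d ≠ 0) :
    ℓ < (macaulayMax ℓ d + 1).choose d := by
  rcases (Nat.findGreatest_le (P := fun a => a.choose d ≤ ℓ) (ℓ + d)).lt_or_eq with hlt | heq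
  · exact not_le.mp <|
      Nat.findGreatest_is_greatest (P := fun a => a.choose d ≤ ℓ) (lt_add_one _) hlt
  -- the search range `ℓ + d` of `macaulayMax` is never binding, as `ℓ < C(ℓ + d, d)`
  · obtain ⟨k, rfl⟩ : ∃ k, d = k + 1 := ⟨d - 1, by omega⟩
    have := succ_le_choose_add_succ ℓ k
    have := choose_macaulayMax_le ℓ hd
    rw [macaulayMax, heq, ← add_assoc] at *
    omega

lemma macaulayMax_le_of_lt_choose {ℓ b d : ℕ} (hd : d ≠ 0) (h : ℓ < (b + 1).choose d) :
    macaulayMax ℓ d ≤ b := by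
  by_contra! hb
  exact (choose_macaulayMax_le ℓ hd).not_gt (h.trans_le (Nat.choose_le_choose d hb))

lemma sub_choose_macaulayMax_le (ℓ d : ℕ) :
    ℓ - (macaulayMax ℓ (d + 2)).choose (d + 2) ≤ (macaulayMax ℓ (d + 2)).choose (d + 1) := by
  have : ℓ < (macaulayMax ℓ (d + 2) + 1).choose (d + 2) := lt_choose_macaulayMax_succ ℓ (by omega)
  have : (macaulayMax ℓ (d + 2) + 1).choose (d + 2) =
      (macaulayMax ℓ (d + 2)).choose (d + 1) + (macaulayMax ℓ (d + 2)).choose (d + 2) :=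
    Nat.choose_succ_succ' _ _
  omega

@[simp]
lemma macaulayOp_zero_left : ∀ d, macaulayOp 0 d = 0
  | 0 | 1 => rfl
  | d + 2 => by
    have : (macaulayMax 0 (d + 2)).choose (d + 2) = 0 :=
      Nat.le_zero.mp (choose_macaulayMax_le 0 (by omega))
    have := Nat.choose_eq_zero_iff.mp this
    rw [macaulayOp, Nat.zero_sub, macaulayOp_zero_left, add_zero,
      Nat.choose_eq_zero_of_lt (by omega)]

lemma macaulayOp_le_choose_succ (d : ℕ) {ℓ b : ℕ} (h : ℓ ≤ b.choose (d + 1)) :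
    macaulayOp ℓ (d + 1) ≤ b.choose (d + 2) := by
  induction d generalizing ℓ b with
  | zero => exact Nat.choose_le_choose 2 (by simpa using h)
  | succ d ih =>
    change ℓ ≤ b.choose (d + 2) at h
    change macaulayOp ℓ (d + 2) ≤ b.choose (d + 3)
    rcases Nat.eq_zero_or_pos ℓ with rfl | hℓ
    · simp
    have hab : macaulayMax ℓ (d + 2) ≤ b := by
      refine macaulayMax_le_of_lt_choose (by omega) (h.trans_lt ?_)
      refine choose_succ_lt_choose_succ (Nat.lt_succ_self b) ?_
      by_contra! hb
      rw [Nat.choose_eq_zero_of_lt (by omega)] at h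
      omega
    have hrem := ih (sub_choose_macaulayMax_le ℓ d)
    rw [macaulayOp]
    rcases hab.lt_or_eq with hlt | rfl
    · have : (macaulayMax ℓ (d + 2)).choose (d + 2) + (macaulayMax ℓ (d + 2)).choose (d + 3) ≤
          b.choose (d + 3) := choose_add_choose_succ_le hlt _
      omega
    · rw [Nat.sub_eq_zero_of_le h]
      simp

lemma macaulayOp_le_choose_add_choose (d : ℕ) {ℓ c μ : ℕ} (hμ : μ < c)
    (h : ℓ ≤ c.choose (d + 2) + μ.choose (d + 1)) :
    macaulayOp ℓ (d + 2) ≤ c.choose (d + 3) + μ.choose (d + 2) := by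
  rcases Nat.eq_zero_or_pos ℓ with rfl | hℓ
  · simp
  have hdc : d < c := by
    by_contra! hcd
    rw [Nat.choose_eq_zero_of_lt (by omega), Nat.choose_eq_zero_of_lt (by omega)] at h
    omega
  have hac : macaulayMax ℓ (d + 2) ≤ c := by
    refine macaulayMax_le_of_lt_choose (by omega) (h.trans_lt ?_)
    have := choose_succ_lt_choose_succ hμ hdc
    have : (c + 1).choose (d + 2) = c.choose (d + 1) + c.choose (d + 2) :=
      Nat.choose_succ_succ' c (d + 1)
    omega
  have hrem := sub_choose_macaulayMax_le ℓ d
  rw [macaulayOp]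
  -- A leading coefficient below `c` is absorbed by Pascal's rule; equal to `c`, it leaves a
  -- remainder of at most `C(μ, d + 1)`.
  rcases hac.lt_or_eq with hlt | heq
  · have : (macaulayMax ℓ (d + 2)).choose (d + 2) + (macaulayMax ℓ (d + 2)).choose (d + 3) ≤
        c.choose (d + 3) := choose_add_choose_succ_le hlt _
    have := macaulayOp_le_choose_succ d hrem
    omega
  · rw [heq] at hrem ⊢
    have := macaulayOp_le_choose_succ d (b := μ)
      (show ℓ - c.choose (d + 2) ≤ μ.choose (d + 1) by omega)
    omega

section Growth

variable {h : ℕ → ℕ}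

lemma le_choose_add_choose_of_growth (hgrow : ∀ d, 0 < d → h (d + 1) ≤ macaulayOp (h d) d)
    {c μ : ℕ} (hμ : μ < c) (h2 : h 2 ≤ c.choose 2 + μ) (d : ℕ) :
    h (d + 2) ≤ c.choose (d + 2) + μ.choose (d + 1) := by
  induction d with
  | zero => simpa using h2
  | succ d ih => exact (hgrow _ (by omega)).trans (macaulayOp_le_choose_add_choose d hμ ih)

lemma eq_zero_of_growth (hgrow : ∀ d, 0 < d → h (d + 1) ≤ macaulayOp (h d) d)
    {d : ℕ} (hd : 0 < d) (h0 : h d = 0) {e : ℕ} (he : d ≤ e) : h e = 0 := by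
  induction e, he using Nat.le_induction with
  | base => exact h0
  | succ e he ih => simpa [ih] using hgrow e (by omega)

lemma eq_zero_of_growth_of_le_choose_add (hgrow : ∀ d, 0 < d → h (d + 1) ≤ macaulayOp (h d) d)
    {c μ : ℕ} (hμ : μ < c) (h2 : h 2 ≤ c.choose 2 + μ) {e : ℕ} (he : c + 1 ≤ e) : h e = 0 := by
  refine eq_zero_of_growth hgrow (Nat.succ_pos c) ?_ he
  have := le_choose_add_choose_of_growth hgrow hμ h2 (c - 1)
  rwa [show c - 1 + 2 = c + 1 by omega, show c - 1 + 1 = c by omega,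
    Nat.choose_eq_zero_of_lt (lt_add_one c), Nat.choose_eq_zero_of_lt hμ, Nat.le_zero] at this

end Growth

section HilbertFunction

open Module

lemma homogeneousSubmodule_le_span_monomial (σ R : Type*) [CommSemiring R] [DecidableEq σ]
    (d : ℕ) :
    homogeneousSubmodule σ R d ≤ Submodule.span R
      (Set.range fun s : Sym σ d => monomial (Multiset.toFinsupp (s : Multiset σ)) (1 : R)) := by
  intro p hp
  rw [← p.support_sum_monomial_coeff]
  refine Submodule.sum_mem _ fun s hs => ?_
  have hdeg : Multiset.card (Finsupp.toMultiset s) = d := by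
    rw [Finsupp.card_toMultiset, ← hp (mem_support_iff.mp hs), Finsupp.weight_apply]
    simp [Finsupp.sum]
  rw [← mul_one (coeff s p), ← smul_eq_mul, ← smul_monomial]
  exact Submodule.smul_mem _ _ (Submodule.subset_span ⟨⟨_, hdeg⟩, by simp⟩)

lemma finrank_homogeneousSubmodule_le (σ K : Type*) [Fintype σ] [Field K] (d : ℕ) :
    finrank K (homogeneousSubmodule σ K d) ≤ (Fintype.card σ + d - 1).choose d := by
  classical
  have : FiniteDimensional K (Submodule.span K
      (Set.range fun s : Sym σ d => monomial (Multiset.toFinsupp (s : Multiset σ)) (1 : K))) :=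
    FiniteDimensional.span_of_finite K (Set.finite_range _)
  calc finrank K (homogeneousSubmodule σ K d)
      ≤ (Set.range fun s : Sym σ d =>
          monomial (Multiset.toFinsupp (s : Multiset σ)) (1 : K)).finrank K :=
        Submodule.finrank_mono (homogeneousSubmodule_le_span_monomial σ K d)
    _ ≤ Fintype.card (Sym σ d) := finrank_range_le_card _
    _ = _ := Sym.card_sym_eq_choose d

variable {K : Type*} [Field K] {n : ℕ} {I : Ideal (MvPolynomial (Fin n) K)} {d : ℕ}

instance : FiniteDimensional K (homogeneousSubmodule (Fin n) K d) :=
  Module.Finite.iff_fg.mpr (homogeneousSubmodule_fg _ _ d)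

lemma hilbFn_eq_zero_iff :
    hilbFn K n I d = 0 ↔
      (homogeneousSubmodule (Fin n) K d).map (Ideal.Quotient.mkₐ K I).toLinearMap = ⊥ :=
  Submodule.finrank_eq_zero

lemma hilbFn_add_card_le {ι : Type*} [Fintype ι] (f : ι → MvPolynomial (Fin n) K)
    (hf : ∀ i, (f i).IsHomogeneous d) (hli : LinearIndependent K f) (hfI : ∀ i, f i ∈ I) :
    hilbFn K n I d + Fintype.card ι ≤ (n + d - 1).choose d := by
  let V := homogeneousSubmodule (Fin n) K d
  let φ := (Ideal.Quotient.mkₐ K I).toLinearMap.domRestrict V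
  let g : ι → V := fun i => ⟨f i, hf i⟩
  have hker : Submodule.span K (Set.range g) ≤ LinearMap.ker φ :=
    Submodule.span_le.mpr <| Set.range_subset_iff.mpr fun i => by
      simpa [φ, g, Ideal.Quotient.eq_zero_iff_mem] using hfI i
  have hcard : Fintype.card ι ≤ finrank K (LinearMap.ker φ) := by
    have hg : LinearIndependent K g := LinearIndependent.of_comp V.subtype hli
    rw [← finrank_span_eq_card hg]
    exact Submodule.finrank_mono hker
  have hrange : hilbFn K n I d = finrank K (LinearMap.range φ) := by
    rw [LinearMap.range_domRestrict]; rfl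
  have hV : finrank K V ≤ (n + d - 1).choose d := by
    simpa using finrank_homogeneousSubmodule_le (Fin n) K d
  have := φ.finrank_range_add_finrank_ker
  omega

end HilbertFunction

/-- Eisenbud–Green–Harris bound: if `I ⊆ K[x₁,…,xₙ]` is generated by `m` linearly
independent homogeneous quadrics and satisfies the Macaulay growth bound
`dim (R/I)_{d+1} ≤ (dim (R/I)_d)^(d)` for all `d > 0`, and `α` is the integer with
`C(n+1,2) − C(n−α,2) < m ≤ C(n+1,2) − C(n−α−1,2)`, then `(R/I)_d = 0` for all
`d ≥ n − α`. -/
theorem egh_vanishing (K : Type*) [Field K] (n m α : ℕ)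
    (I : Ideal (MvPolynomial (Fin n) K))
    (hgrow : ∀ d : ℕ, 0 < d → hilbFn K n I (d + 1) ≤ macaulayOp (hilbFn K n I d) d)
    (f : Fin m → MvPolynomial (Fin n) K)
    (hfhom : ∀ i, (f i).IsHomogeneous 2)
    (hfind : LinearIndependent K f)
    (hspan : I = Ideal.span (Set.range f))
    (hα1 : (n + 1).choose 2 - (n - α).choose 2 < m)
    (hα2 : m ≤ (n + 1).choose 2 - (n - α - 1).choose 2) :
    ∀ d : ℕ, n - α ≤ d →
      (homogeneousSubmodule (Fin n) K d).map (Ideal.Quotient.mkₐ K I).toLinearMap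
        = ⊥ := by
  have hdim : hilbFn K n I 2 + m ≤ (n + 1).choose 2 := by
    simpa using hilbFn_add_card_le f hfhom hfind fun i => hspan ▸ Ideal.subset_span ⟨i, rfl⟩
  obtain ⟨c, hc⟩ : ∃ c, n - α = c + 1 := by
    refine ⟨n - α - 1, ?_⟩
    by_contra! h
    rw [Nat.choose_eq_zero_of_lt (by omega : n - α < 2)] at hα1
    rw [Nat.choose_eq_zero_of_lt (by omega : n - α - 1 < 2)] at hα2
    omega
  rw [hc, Nat.add_sub_cancel] at hα2
  rw [hc] at hα1
  have hpascal : (c + 1).choose 2 = c.choose 1 + c.choose 2 := Nat.choose_succ_succ' c 1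
  have hmono : (c + 1).choose 2 ≤ (n + 1).choose 2 := Nat.choose_le_choose 2 (by omega)
  rw [Nat.choose_one_right] at hpascal
  intro d hd
  exact hilbFn_eq_zero_iff.mp <| eq_zero_of_growth_of_le_choose_add hgrow
    (μ := (n + 1).choose 2 - c.choose 2 - m) (by omega) (by omega) (hc ▸ hd)
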